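/- Multipartite hypergraph Ramsey theorem: fix k ≥ 1, vectors n, m ∈ ℕᵏ, and c ≥ 1 colors. There exists R ∈ ℕ such that for every list X = (X₁,…,X_k) of finite sets with |Xᵢ| ≥ R for all i, and every c-coloring of all subset-lists of X, there is a subset-list Y ⊆ X with |Yᵢ| ≥ nᵢ for all i such that for every a ≤ m (coordinatewise), all a-subset-lists of Y receive the same color. -/

import Mathlib

/-!
Ordinary hypergraph Ramsey, with a target size for each colour, follows by induction on the
uniformity and, inside, on the targets. For the multipartite version, order the `R` ground points,
cut a set `T` of them into consecutive blocks of sizes `a₀, a₁, …` and colour `T` by the colour of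
the subset-list of these blocks, one colour for every admissible `a`. Take `H` homogeneous for all
uniformities `≤ ∑ mᵢ`, cut it into consecutive blocks of sizes `nᵢ` and send the `i`-th block into
`Xᵢ`. Every `a`-subset-list of the image is the block decomposition of some `(∑ aᵢ)`-subset of
`H`, so its colour depends only on `a`.
-/

open Finset

namespace HypergraphRamsey

variable {β κ : Type*} {col : Finset β → κ} {r : ℕ} {x : κ} {H : Finset β}

def IsMonochromatic (col : Finset β → κ) (r : ℕ) (x : κ) (H : Finset β) : Prop :=
  ∀ A ⊆ H, #A = r → col A = x

def IsHomogeneous (col : Finset β → κ) (r : ℕ) (H : Finset β) : Prop :=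
  ∀ A ⊆ H, ∀ B ⊆ H, #A = r → #B = r → col A = col B

/-- The bound is uniform in the ground type `β`, which is later `Fin R` itself. -/
def IsRamseyBound (κ : Type*) (r : ℕ) (p : κ → ℕ) (R : ℕ) : Prop :=
  ∀ (β : Type) [DecidableEq β] (V : Finset β), R ≤ #V → ∀ col : Finset β → κ,
    ∃ x, ∃ H ⊆ V, p x ≤ #H ∧ IsMonochromatic col r x H

theorem IsMonochromatic.isHomogeneous (hH : IsMonochromatic col r x H) : IsHomogeneous col r H :=
  fun A hA B hB hAr hBr => (hH A hA hAr).trans (hH B hB hBr).symm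

theorem IsHomogeneous.mono {H' : Finset β} (hHH' : H ⊆ H')
    (hH' : IsHomogeneous col r H') : IsHomogeneous col r H :=
  fun A hA B hB => hH' A (hA.trans hHH') B (hB.trans hHH')

theorem isHomogeneous_zero (col : Finset β → κ) (H : Finset β) : IsHomogeneous col 0 H := by
  intro A _ B _ hA hB
  rw [card_eq_zero.mp hA, card_eq_zero.mp hB]

theorem IsMonochromatic.insert [DecidableEq β] {v : β} (hH : IsMonochromatic col (r + 1) x H)
    (hv : IsMonochromatic (fun A => col (insert v A)) r x H) :
    IsMonochromatic col (r + 1) x (insert v H) := by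
  intro B hB hBr
  by_cases hvB : v ∈ B
  · rw [← insert_erase hvB]
    refine hv _ (fun y hy => ?_) (by rw [card_erase_of_mem hvB, hBr, Nat.add_sub_cancel])
    obtain ⟨hyv, hyB⟩ := mem_erase.mp hy
    exact (mem_insert.mp (hB hyB)).resolve_left hyv
  · exact hH B ((subset_insert_iff_of_notMem hvB).mp hB) hBr

theorem isRamseyBound_zero [Fintype κ] (p : κ → ℕ) : IsRamseyBound κ 0 p (univ.sup p) := by
  intro β _ V hV col
  obtain ⟨H, hHV, hH⟩ := exists_subset_card_eq ((le_sup (mem_univ (col ∅))).trans hV)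
  exact ⟨col ∅, H, hHV, hH.ge, fun A _ hA => by rw [card_eq_zero.mp hA]⟩

/-- Colour the `r`-sets `A` avoiding a point `v` by the colour of `insert v A`. A large
monochromatic set for this colouring, of colour `x` say, contains either a large monochromatic set
of another colour, or one of colour `x` that stays monochromatic after adding `v`. -/
theorem exists_isRamseyBound_succ [Fintype κ]
    (hr : ∀ q : κ → ℕ, ∃ R, IsRamseyBound κ r q R) (p : κ → ℕ) :
    ∃ R, IsRamseyBound κ (r + 1) p R := by
  induction p using WellFoundedLT.induction with
  | ind p ih =>
  classical
  by_cases hp : ∃ x, p x = 0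
  · obtain ⟨x, hx⟩ := hp
    refine ⟨0, fun β _ V _ col => ⟨x, ∅, empty_subset V, by simp [hx], fun A hA hAr => ?_⟩⟩
    simp [subset_empty.mp hA] at hAr
  simp only [not_exists] at hp
  choose q hq using fun x =>
    ih (Function.update p x (p x - 1)) (update_lt_self_iff.mpr (by have := hp x; omega))
  obtain ⟨R, hR⟩ := hr q
  refine ⟨R + 1, fun β _ V hV col => ?_⟩
  obtain ⟨v, hv⟩ : V.Nonempty := card_pos.mp (by omega)
  obtain ⟨x, H', hH'V, hqH', hH'⟩ :=
    hR β (V.erase v) (by rw [card_erase_of_mem hv]; omega) (fun A => col (insert v A))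
  obtain ⟨y, H, hHH', hpH, hH⟩ := hq x β H' hqH' col
  have hvH : v ∉ H := fun h => by simpa using hH'V (hHH' h)
  by_cases hyx : y = x
  · subst hyx
    refine ⟨y, insert v H, insert_subset hv ((hHH'.trans hH'V).trans (erase_subset v V)), ?_,
      hH.insert fun A hA => hH' A (hA.trans hHH')⟩
    rw [card_insert_of_notMem hvH]
    simp only [Function.update_self] at hpH
    omega
  · refine ⟨y, H, (hHH'.trans hH'V).trans (erase_subset v V), ?_, hH⟩
    rwa [Function.update_of_ne hyx] at hpH

theorem exists_isRamseyBound [Fintype κ] (r : ℕ) (p : κ → ℕ) : ∃ R, IsRamseyBound κ r p R := by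
  induction r generalizing p with
  | zero => exact ⟨_, isRamseyBound_zero p⟩
  | succ r ih => exact exists_isRamseyBound_succ ih p

theorem exists_isHomogeneous_forall_le (κ : Type*) [Fintype κ] (S n : ℕ) :
    ∃ R, ∀ (β : Type) [DecidableEq β] (V : Finset β), R ≤ #V → ∀ col : Finset β → κ,
      ∃ H ⊆ V, n ≤ #H ∧ ∀ r ≤ S, IsHomogeneous col r H := by
  induction S with
  | zero =>
    refine ⟨n, fun β _ V hV col => ⟨V, subset_rfl, hV, fun r hr => ?_⟩⟩
    rw [Nat.le_zero.mp hr]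
    exact isHomogeneous_zero col V
  | succ S ih =>
    obtain ⟨R₁, hR₁⟩ := ih
    obtain ⟨R, hR⟩ := exists_isRamseyBound (S + 1) fun _ : κ => R₁
    refine ⟨R, fun β _ V hV col => ?_⟩
    obtain ⟨x, H₁, hH₁V, hH₁card, hH₁⟩ := hR β V hV col
    obtain ⟨H, hHH₁, hHcard, hH⟩ := hR₁ β H₁ hH₁card col
    refine ⟨H, hHH₁.trans hH₁V, hHcard, fun r hr => ?_⟩
    rcases Nat.lt_or_ge r (S + 1) with hrS | hrS
    · exact hH r (by omega)
    · rw [show r = S + 1 by omega]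
      exact hH₁.isHomogeneous.mono hHH₁

end HypergraphRamsey

namespace Finset

variable {β ι : Type*} [LinearOrder β] [Fintype ι] [LinearOrder ι]

def blockOffset (a : ι → ℕ) (i : ι) : ℕ := ∑ j with j < i, a j

def block (T : Finset β) (a : ι → ℕ) (i : ι) : Finset β :=
  {t ∈ T | blockOffset a i ≤ #{s ∈ T | s < t} ∧ #{s ∈ T | s < t} < blockOffset a i + a i}

theorem blockOffset_add_le_sum (a : ι → ℕ) (i : ι) :
    blockOffset a i + a i ≤ ∑ j, a j := by
  rw [blockOffset, add_comm, ← sum_insert (by simp)]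
  exact sum_le_sum_of_subset (subset_univ _)

theorem blockOffset_add_le {a : ι → ℕ} {i j : ι} (hij : i < j) :
    blockOffset a i + a i ≤ blockOffset a j := by
  rw [blockOffset, add_comm, ← sum_insert (by simp)]
  refine sum_le_sum_of_subset fun l hl => ?_
  rcases mem_insert.mp hl with rfl | hl
  · simpa using hij
  · simpa using (mem_filter.mp hl).2.trans hij

theorem strictMonoOn_card_filter_lt (T : Finset β) :
    StrictMonoOn (fun t => #{s ∈ T | s < t}) T := by
  intro s hs t _ hst
  refine card_lt_card ((ssubset_iff_of_subset fun u hu => ?_).mpr ⟨s, ?_, ?_⟩)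
  · simp only [mem_filter] at hu ⊢
    exact ⟨hu.1, hu.2.trans hst⟩
  · exact mem_filter.mpr ⟨hs, hst⟩
  · simp

theorem image_card_filter_lt (T : Finset β) :
    T.image (fun t => #{s ∈ T | s < t}) = range #T := by
  refine eq_of_subset_of_card_le (fun r hr => ?_) ?_
  · obtain ⟨t, ht, rfl⟩ := mem_image.mp hr
    exact mem_range.mpr (card_lt_card (filter_ssubset.mpr ⟨t, ht, lt_irrefl t⟩))
  · rw [card_range, card_image_of_injOn (strictMonoOn_card_filter_lt T).injOn]

theorem block_subset (T : Finset β) (a : ι → ℕ) (i : ι) : block T a i ⊆ T :=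
  filter_subset _ _

theorem lt_of_mem_block {T : Finset β} {a : ι → ℕ} {i j : ι} (hij : i < j) {s t : β}
    (hs : s ∈ block T a i) (ht : t ∈ block T a j) : s < t := by
  obtain ⟨hsT, -, hs⟩ := mem_filter.mp hs
  obtain ⟨htT, ht, -⟩ := mem_filter.mp ht
  have := blockOffset_add_le (a := a) hij
  exact (strictMonoOn_card_filter_lt T).lt_iff_lt hsT htT |>.mp (by omega)

theorem card_block {T : Finset β} {a : ι → ℕ} (hT : #T = ∑ j, a j) (i : ι) :
    #(block T a i) = a i := by
  have hsum := blockOffset_add_le_sum a i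
  have himage : (block T a i).image (fun t => #{s ∈ T | s < t}) =
      Ico (blockOffset a i) (blockOffset a i + a i) := by
    ext r
    simp only [block, mem_image, mem_filter, mem_Ico]
    refine ⟨fun ⟨t, ⟨_, hr⟩, htr⟩ => htr ▸ hr, fun hr => ?_⟩
    have hrT : r ∈ T.image (fun t => #{s ∈ T | s < t}) := by
      rw [image_card_filter_lt, mem_range, hT]
      omega
    obtain ⟨t, ht, rfl⟩ := mem_image.mp hrT
    exact ⟨t, ⟨ht, hr⟩, rfl⟩
  rw [← card_image_of_injOn ((strictMonoOn_card_filter_lt T).injOn.mono (block_subset T a i)),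
    himage, Nat.card_Ico, Nat.add_sub_cancel_left]

theorem pairwiseDisjoint_of_forall_lt {P : ι → Finset β}
    (hP : ∀ i j, i < j → ∀ s ∈ P i, ∀ t ∈ P j, s < t) :
    (↑(univ : Finset ι) : Set ι).PairwiseDisjoint P := by
  intro i _ j _ hij
  refine disjoint_left.mpr fun s hsi hsj => ?_
  rcases hij.lt_or_gt with h | h
  · exact lt_irrefl s (hP i j h s hsi s hsj)
  · exact lt_irrefl s (hP j i h s hsj s hsi)

theorem card_filter_lt_biUnion {P : ι → Finset β}
    (hP : ∀ i j, i < j → ∀ s ∈ P i, ∀ t ∈ P j, s < t) {j : ι} {t : β} (ht : t ∈ P j) :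
    #{s ∈ univ.biUnion P | s < t} = blockOffset (fun i => #(P i)) j + #{s ∈ P j | s < t} := by
  rw [filter_biUnion, card_biUnion ((pairwiseDisjoint_of_forall_lt hP).mono_on
      fun i _ => filter_subset _ (P i)), ← sum_filter_add_sum_filter_not univ (· < j)]
  congr 1
  · refine sum_congr rfl fun l hl => ?_
    rw [filter_true_of_mem fun s hs => hP l j (mem_filter.mp hl).2 s hs t ht]
  · refine sum_eq_single_of_mem j (by simp) fun l hl hlj => card_eq_zero.mpr <|
      filter_false_of_mem fun s hs => not_lt.mpr (hP j l ?_ t ht s hs).le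
    exact lt_of_le_of_ne (not_lt.mp (mem_filter.mp hl).2) (Ne.symm hlj)

theorem block_biUnion {P : ι → Finset β} (hP : ∀ i j, i < j → ∀ s ∈ P i, ∀ t ∈ P j, s < t)
    (i : ι) : block (univ.biUnion P) (fun j => #(P j)) i = P i := by
  have hrank {j : ι} {t : β} (ht : t ∈ P j) : #{s ∈ P j | s < t} < #(P j) :=
    card_lt_card (filter_ssubset.mpr ⟨t, ht, lt_irrefl t⟩)
  ext t
  refine ⟨fun h => ?_, fun hti => ?_⟩
  · obtain ⟨htT, h₁, h₂⟩ := mem_filter.mp h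
    obtain ⟨j, -, htj⟩ := mem_biUnion.mp htT
    rw [card_filter_lt_biUnion hP htj] at h₁ h₂
    dsimp only at h₂
    have := hrank htj
    rcases lt_trichotomy i j with hij | rfl | hij
    · have := blockOffset_add_le (a := fun j => #(P j)) hij
      omega
    · exact htj
    · have := blockOffset_add_le (a := fun j => #(P j)) hij
      omega
  · refine mem_filter.mpr ⟨mem_biUnion.mpr ⟨i, mem_univ i, hti⟩, ?_⟩
    rw [card_filter_lt_biUnion hP hti]
    dsimp only
    have := hrank hti
    omega

theorem exists_block_map_eq {α : Type*} {H : Finset β} {n a : ι → ℕ} (x : ι → β ↪ α)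
    {Z : ι → Finset α} (hZ : ∀ i, Z i ⊆ (block H n i).map (x i)) (hZa : ∀ i, #(Z i) = a i) :
    ∃ T ⊆ H, #T = ∑ i, a i ∧ ∀ i, (block T a i).map (x i) = Z i := by
  choose P hPH hPZ using fun i => subset_map_iff.mp (hZ i)
  have hP : ∀ i j, i < j → ∀ s ∈ P i, ∀ t ∈ P j, s < t :=
    fun i j hij s hs t ht => lt_of_mem_block hij (hPH i hs) (hPH j ht)
  have ha : a = fun i => #(P i) := funext fun i => by rw [← hZa, hPZ, card_map]
  subst ha
  refine ⟨univ.biUnion P, biUnion_subset.mpr fun i _ => (hPH i).trans (block_subset H n i),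
    card_biUnion (pairwiseDisjoint_of_forall_lt hP), fun i => ?_⟩
  rw [block_biUnion hP, hPZ]

end Finset

theorem stmt_18_general (k : ℕ) (n m : Fin k → ℕ) (c : ℕ) :
    ∃ R : ℕ, ∀ (α : Type) (X : Fin k → Finset α),
      (∀ i, R ≤ (X i).card) →
      ∀ col : (Fin k → Finset α) → Fin c,
      ∃ Y : Fin k → Finset α,
        (∀ i, Y i ⊆ X i) ∧ (∀ i, n i ≤ (Y i).card) ∧
        ∀ a : Fin k → ℕ, (∀ i, a i ≤ m i) →
          ∀ Z W : Fin k → Finset α,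
            (∀ i, Z i ⊆ Y i) → (∀ i, (Z i).card = a i) →
            (∀ i, W i ⊆ Y i) → (∀ i, (W i).card = a i) →
            col Z = col W := by
  obtain ⟨R, hR⟩ := HypergraphRamsey.exists_isHomogeneous_forall_le
    ((∀ i, Fin (m i + 1)) → Fin c) (∑ i, m i) (∑ i, n i)
  refine ⟨R, fun α X hX col => ?_⟩
  choose x hx using fun i =>
    Function.Embedding.exists_of_card_le_finset ((Fintype.card_fin R).trans_le (hX i))
  let col' (T : Finset (Fin R)) (b : ∀ i, Fin (m i + 1)) : Fin c :=
    col fun i => (T.block (fun j => b j) i).map (x i)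
  obtain ⟨H, -, hHcard, hH⟩ := hR (Fin R) univ (by simp) col'
  obtain ⟨H', hH'H, hH'card⟩ := exists_subset_card_eq hHcard
  refine ⟨fun i => (H'.block n i).map (x i), fun i => ?_, fun i => ?_,
    fun a ha Z W hZ hZa hW hWa => ?_⟩
  · intro y hy
    obtain ⟨t, -, rfl⟩ := mem_map.mp hy
    exact hx i (Set.mem_range_self t)
  · rw [card_map, card_block hH'card]
  · obtain ⟨T, hTH', hT, hTZ⟩ := exists_block_map_eq x hZ hZa
    obtain ⟨U, hUH', hU, hUW⟩ := exists_block_map_eq x hW hWa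
    let b : ∀ i, Fin (m i + 1) := fun i => ⟨a i, Nat.lt_succ_of_le (ha i)⟩
    calc col Z = col' T b := by simp only [col', b, hTZ]
      _ = col' U b := congrFun (hH _ (sum_le_sum fun i _ => ha i) T (hTH'.trans hH'H)
            U (hUH'.trans hH'H) hT hU) b
      _ = col W := by simp only [col', b, hUW]

theorem stmt_18 (k : ℕ) (hk : 1 ≤ k) (n m : Fin k → ℕ) (c : ℕ) (hc : 1 ≤ c) :
    ∃ R : ℕ, ∀ (α : Type) (X : Fin k → Finset α),
      (∀ i, R ≤ (X i).card) →
      ∀ col : (Fin k → Finset α) → Fin c,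
      ∃ Y : Fin k → Finset α,
        (∀ i, Y i ⊆ X i) ∧ (∀ i, n i ≤ (Y i).card) ∧
        ∀ a : Fin k → ℕ, (∀ i, a i ≤ m i) →
          ∀ Z W : Fin k → Finset α,
            (∀ i, Z i ⊆ Y i) → (∀ i, (Z i).card = a i) →
            (∀ i, W i ⊆ Y i) → (∀ i, (W i).card = a i) →
            col Z = col W :=
  stmt_18_general k n m c
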